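/- Work in ℂ³ ⊗ ℂ³ and let λ, μ ∈ ℂ with λ ≠ 0 and λ ≠ μ. Then the linear span S_{P,λ,μ} of the Parthasarathy space S_P together with the van der Monde vectors z_λ and z_μ contains infinitely many distinct one-dimensional subspaces spanned by product vectors; in particular, S_{P,λ,μ} is not a quasi-completely entangled subspace. -/

import Mathlib

noncomputable section

abbrev H3 : Type := EuclideanSpace ℂ (Fin 3)
abbrev H33 : Type := EuclideanSpace ℂ (Fin 3 × Fin 3)

/-- standard basis vector of ℂ³ -/
def ket3 (i : Fin 3) : H3 := EuclideanSpace.single i 1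

/-- elementary tensor of two vectors of ℂ³, viewed in ℂ³ ⊗ ℂ³ ≅ ℂ⁹ -/
def tp (u v : H3) : H33 := WithLp.toLp 2 (fun p : Fin 3 × Fin 3 => u p.1 * v p.2)

/-- the set of one-dimensional subspaces of `T` spanned by (nonzero) product vectors -/
def prodLines (T : Submodule ℂ H33) : Set (Submodule ℂ H33) :=
  {L | ∃ ξ : H33, ξ ≠ 0 ∧ ξ ∈ T ∧ (∃ u v : H3, ξ = tp u v) ∧ L = Submodule.span ℂ {ξ}}

/-- the vector |0⟩ + λ|1⟩ + λ²|2⟩ -/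
def vand (lam : ℂ) : H3 := WithLp.toLp 2 (fun i : Fin 3 => lam ^ (i : ℕ))

/-- the van der Monde vector z_λ -/
def zv (lam : ℂ) : H33 := tp (vand lam) (vand lam)

/-- the van der Monde vector z_∞ = |2⟩ ⊗ |2⟩ -/
def zvinf : H33 := tp (ket3 2) (ket3 2)

/-- the span of all van der Monde vectors -/
def FP : Submodule ℂ H33 := Submodule.span ℂ (insert zvinf (Set.range zv))

/-- the Parthasarathy completely entangled subspace of ℂ³ ⊗ ℂ³ -/
def SP33 : Submodule ℂ H33 := FPᗮ

/-!
With `v_ν = |0⟩ + ν|1⟩ + ν²|2⟩`, expanding the product vector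
`(v_λ + c v_μ) ⊗ (v_λ - c v_μ) = z_λ - c² z_μ + c (v_μ ⊗ v_λ - v_λ ⊗ v_μ)` shows that it lies in
`S_{P,λ,μ}`: an antisymmetric tensor `a ⊗ b - b ⊗ a` is orthogonal to every symmetric product
`w ⊗ w`, in particular to all van der Monde vectors, so it lies in `S_P`. For `c ≠ ±1` these
product vectors are nonzero, and for `λ ≠ μ` distinct values of `c` give distinct lines.
-/

open scoped InnerProductSpace

lemma inner_tp_tp (u v a b : H3) : ⟪tp u v, tp a b⟫_ℂ = ⟪u, a⟫_ℂ * ⟪v, b⟫_ℂ := by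
  simp only [tp, PiLp.inner_apply, RCLike.inner_apply, Fintype.sum_prod_type, Finset.sum_mul_sum,
    map_mul]
  exact Finset.sum_congr rfl fun _ _ => Finset.sum_congr rfl fun _ _ => by ring

lemma inner_tp_sub_tp_swap_tp_self (a b w : H3) : ⟪tp a b - tp b a, tp w w⟫_ℂ = 0 := by
  rw [inner_sub_left, inner_tp_tp, inner_tp_tp, mul_comm, sub_self]

lemma tp_sub_tp_swap_mem_SP33 (a b : H3) : tp a b - tp b a ∈ SP33 := by
  rw [SP33, FP, ← Submodule.span_singleton_le_iff_mem, ← Submodule.isOrtho_iff_le,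
    Submodule.isOrtho_span]
  rintro _ rfl _ (rfl | ⟨ν, rfl⟩)
  · exact inner_tp_sub_tp_swap_tp_self a b _
  · exact inner_tp_sub_tp_swap_tp_self a b _

def mixedProduct (lam mu c : ℂ) : H33 := tp (vand lam + c • vand mu) (vand lam - c • vand mu)

lemma mixedProduct_eq (lam mu c : ℂ) :
    mixedProduct lam mu c
      = zv lam - c ^ 2 • zv mu + c • (tp (vand mu) (vand lam) - tp (vand lam) (vand mu)) := by
  ext p
  simp only [mixedProduct, zv, tp, PiLp.add_apply, PiLp.sub_apply, PiLp.smul_apply, smul_eq_mul]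
  ring

lemma mixedProduct_mem (lam mu c : ℂ) :
    mixedProduct lam mu c ∈ SP33 ⊔ Submodule.span ℂ {zv lam} ⊔ Submodule.span ℂ {zv mu} := by
  rw [mixedProduct_eq, sub_add_eq_add_sub, add_comm]
  exact sub_mem
    (add_mem (Submodule.mem_sup_left (Submodule.mem_sup_left
        (Submodule.smul_mem _ c (tp_sub_tp_swap_mem_SP33 _ _))))
      (Submodule.mem_sup_left (Submodule.mem_sup_right (Submodule.mem_span_singleton_self _))))
    (Submodule.mem_sup_right (Submodule.smul_mem _ _ (Submodule.mem_span_singleton_self _)))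

lemma mixedProduct_apply_zero_zero (lam mu c : ℂ) :
    mixedProduct lam mu c (0, 0) = (1 + c) * (1 - c) := by
  simp [mixedProduct, tp, vand]

lemma mixedProduct_apply_one_zero (lam mu c : ℂ) :
    mixedProduct lam mu c (1, 0) = (lam + c * mu) * (1 - c) := by
  simp [mixedProduct, tp, vand]

lemma mixedProduct_ne_zero {lam mu c : ℂ} (hc : c ∉ ({1, -1} : Set ℂ)) :
    mixedProduct lam mu c ≠ 0 := by
  intro h
  have h00 := congrArg (· (0, 0)) h
  simp only [mixedProduct_apply_zero_zero, PiLp.zero_apply] at h00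
  apply hc
  rw [Set.mem_insert_iff, Set.mem_singleton_iff]
  rcases mul_eq_zero.mp h00 with h | h
  · exact Or.inr (by linear_combination h)
  · exact Or.inl (by linear_combination -h)

lemma span_mixedProduct_injOn {lam mu : ℂ} (hne : lam ≠ mu) :
    Set.InjOn (fun c => Submodule.span ℂ {mixedProduct lam mu c}) {1, -1}ᶜ := by
  intro c hc d hd h
  obtain ⟨a, ha⟩ := Submodule.span_singleton_eq_span_singleton.mp h
  have e00 := congrArg (· (0, 0)) ha
  have e10 := congrArg (· (1, 0)) ha
  simp only [PiLp.smul_apply, Units.smul_def, smul_eq_mul, mixedProduct_apply_zero_zero,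
    mixedProduct_apply_one_zero] at e00 e10
  -- Coordinates `(1,0)` and `(0,0)` have ratio `(λ + cμ) / (1 + c)`, a Möbius function of `c`.
  have hcross : (1 - d) * (lam - mu) * (c - d) = 0 := by
    linear_combination (lam + c * mu) * e00 - (1 + c) * e10
  have h1d : 1 - d ≠ 0 := sub_ne_zero.mpr fun h => hd (Or.inl h.symm)
  have hlm : lam - mu ≠ 0 := sub_ne_zero.mpr hne
  exact sub_eq_zero.mp ((mul_eq_zero.mp hcross).resolve_left (mul_ne_zero h1d hlm))

theorem statement18_general (lam mu : ℂ) (hne : lam ≠ mu) :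
    (prodLines (SP33 ⊔ Submodule.span ℂ {zv lam} ⊔ Submodule.span ℂ {zv mu})).Infinite := by
  have hinf : ({1, -1}ᶜ : Set ℂ).Infinite := (Set.toFinite _).infinite_compl
  refine (hinf.image (span_mixedProduct_injOn hne)).mono ?_
  rintro _ ⟨c, hc, rfl⟩
  exact ⟨_, mixedProduct_ne_zero hc, mixedProduct_mem lam mu c, ⟨_, _, rfl⟩, rfl⟩

theorem statement18 (lam mu : ℂ) (h0 : lam ≠ 0) (hne : lam ≠ mu) :
    (prodLines (SP33 ⊔ Submodule.span ℂ {zv lam} ⊔ Submodule.span ℂ {zv mu})).Infinite :=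
  statement18_general lam mu hne
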